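/- arXiv:1807.05476 — 2 statements merged into one kernel-verified Lean document; each statement's English description precedes it below -/
import Mathlib

section
/- Let $G$ be a compact group with Haar probability measure $m$, let $A_1 \subset G$ be a non-null measurable set, and suppose there is $\mu > 0$ and $0 < c < 1/8$ such that $m(A_1) \leq \mu$ and $m(A_1 x^{-1} \cap A_1) \geq (1 - c)\mu$ for every $x \in A_1$. Then $G_0 = A_1^{-1} A_1$ is an open subgroup of $G$, and moreover $m(A_1 y^{-1} \cap A_1) \geq (1 - 4c)\mu$ for every $y \in G_0 G_0$. -/
/-!
Write `f(y) = m(A₁ y⁻¹ ∩ A₁)`. Right invariance gives `f(y⁻¹) = f(y)` and, translating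
`A₁ z⁻¹ ∩ A₁` by `y⁻¹` into `A₁ y⁻¹`, where it meets `A₁ y⁻¹ ∩ A₁`, inclusion–exclusion gives
`f(yz) ≥ f(y) + f(z) - m(A₁)`. Hence `f ≥ (1 - 2c)μ` on `A₁⁻¹A₁` and `f ≥ (1 - 4c)μ > 0` on
`(A₁⁻¹A₁)²`. Since `f(y) > 0` forces `y ∈ A₁⁻¹A₁`, this set is closed under products, so it is a
subgroup; it contains a translate of `A₁`, which has positive measure, so it is open by Steinhaus.
-/

open MeasureTheory Set Pointwise Topology

section Overlap

variable {G : Type*} [Group G] [MeasurableSpace G] (m : Measure G)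

noncomputable def overlap (A : Set G) (y : G) : ℝ :=
  m.real ((fun a => a * y⁻¹) '' A ∩ A)

lemma mem_inv_mul_of_overlap_pos {A : Set G} {y : G} (h : 0 < overlap m A y) : y ∈ A⁻¹ * A := by
  have hne : ((fun a => a * y⁻¹) '' A ∩ A).Nonempty :=
    nonempty_iff_ne_empty.2 fun he => by
      rw [overlap, he, measureReal_empty] at h
      exact h.false
  obtain ⟨_, ⟨a, ha, rfl⟩, hay⟩ := hne
  exact ⟨(a * y⁻¹)⁻¹, inv_mem_inv.2 hay, a, ha, by group⟩

variable [MeasurableMul G] [m.IsMulRightInvariant]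

lemma measure_image_mul_right (g : G) (S : Set G) : m ((· * g) '' S) = m S := by
  rw [image_mul_right, measure_preimage_mul_right]

lemma overlap_inv (A : Set G) (y : G) : overlap m A y⁻¹ = overlap m A y := by
  unfold overlap Measure.real
  rw [inv_inv, ← measure_image_mul_right m y ((· * y⁻¹) '' A ∩ A),
    image_inter (mul_left_injective y), image_image]
  simp [inter_comm]

lemma overlap_add_overlap_sub_le [IsFiniteMeasure m] {A : Set G} (hA : MeasurableSet A)
    (y z : G) : overlap m A y + overlap m A z - m.real A ≤ overlap m A (y * z) := by
  set U := (· * y⁻¹) '' A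
  set S := (· * y⁻¹) '' ((· * z⁻¹) '' A ∩ A)
  have hU : MeasurableSet (U ∩ A) := by
    simp only [U]
    rw [image_mul_right, inv_inv]
    exact (hA.preimage (measurable_mul_const y)).inter hA
  have hS : m.real S = overlap m A z := by
    simp only [S, overlap, Measure.real, measure_image_mul_right]
  have hUA : m.real U = m.real A := by
    simp only [U, Measure.real, measure_image_mul_right]
  have hSU : S ⊆ U := image_mono inter_subset_right
  have hinter : S ∩ (U ∩ A) ⊆ (· * (y * z)⁻¹) '' A ∩ A := by
    rintro _ ⟨⟨_, ⟨⟨a, ha, rfl⟩, -⟩, rfl⟩, -, hA'⟩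
    exact ⟨⟨a, ha, by group⟩, hA'⟩
  calc overlap m A y + overlap m A z - m.real A
      = m.real (S ∪ (U ∩ A)) + m.real (S ∩ (U ∩ A)) - m.real U := by
        rw [measureReal_union_add_inter hU, hS, hUA, overlap, add_comm]
    _ ≤ m.real U + m.real (S ∩ (U ∩ A)) - m.real U := by
        linarith [measureReal_mono (μ := m) (union_subset hSU (inter_subset_left (t := A)))]
    _ ≤ overlap m A (y * z) := by
        rw [add_sub_cancel_left]
        exact measureReal_mono hinter

lemma le_overlap_of_mem_mul [IsFiniteMeasure m] {A S T : Set G} (hA : MeasurableSet A)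
    {α β μ : ℝ} (hμ : m.real A ≤ μ) (hS : ∀ y ∈ S, α ≤ overlap m A y)
    (hT : ∀ z ∈ T, β ≤ overlap m A z) : ∀ x ∈ S * T, α + β - μ ≤ overlap m A x := by
  rintro _ ⟨y, hy, z, hz, rfl⟩
  linarith [overlap_add_overlap_sub_le m hA y z, hS y hy, hT z hz]

end Overlap

lemma exists_subgroup_coe_eq {G : Type*} [Group G] {S : Set G} (h1 : (1 : G) ∈ S)
    (hinv : S⁻¹ ⊆ S) (hmul : S * S ⊆ S) : ∃ H : Subgroup G, (H : Set G) = S :=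
  ⟨{ carrier := S
     one_mem' := h1
     mul_mem' := fun hx hy => hmul (mul_mem_mul hx hy)
     inv_mem' := fun hx => hinv (inv_mem_inv.2 hx) }, rfl⟩

lemma Subgroup.isOpen_of_measure_pos_subset {G : Type*} [Group G] [TopologicalSpace G]
    [IsTopologicalGroup G] [LocallyCompactSpace G] [MeasurableSpace G] [BorelSpace G]
    (m : Measure G) [m.IsHaarMeasure] [m.InnerRegular] (H : Subgroup G) {B : Set G}
    (hB : MeasurableSet B) (hB0 : 0 < m B) (hBH : B ⊆ H) : IsOpen (H : Set G) := by
  refine H.isOpen_of_mem_nhds (Filter.mem_of_superset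
    (Measure.div_mem_nhds_one_of_haar_pos m B hB hB0) ?_)
  rintro _ ⟨x, hx, y, hy, rfl⟩
  exact H.div_mem (hBH hx) (hBH hy)

theorem stmt_6_general {G : Type*} [Group G] [TopologicalSpace G] [IsTopologicalGroup G]
    [CompactSpace G] [MeasurableSpace G] [BorelSpace G]
    (m : Measure G) [m.IsHaarMeasure] [m.IsMulRightInvariant]
    (A₁ : Set G) (hA₁ : MeasurableSet A₁) (hA₁0 : 0 < m A₁)
    (μ : ℝ) (hμ : 0 < μ) (c : ℝ) (hc : c < 1/8)
    (hle : (m A₁).toReal ≤ μ)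
    (hbig : ∀ x ∈ A₁, (m (((fun a => a * x⁻¹) '' A₁) ∩ A₁)).toReal ≥ (1 - c) * μ) :
    (∃ G₀ : Subgroup G, (G₀ : Set G) = A₁⁻¹ * A₁ ∧ IsOpen (G₀ : Set G))
      ∧ ∀ y ∈ (A₁⁻¹ * A₁) * (A₁⁻¹ * A₁),
          (m (((fun a => a * y⁻¹) '' A₁) ∩ A₁)).toReal ≥ (1 - 4 * c) * μ := by
  obtain ⟨a₀, ha₀⟩ := nonempty_of_measure_ne_zero hA₁0.ne'
  have hinv : ∀ x ∈ A₁⁻¹, (1 - c) * μ ≤ overlap m A₁ x := fun x hx => by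
    rw [← overlap_inv]
    exact hbig x⁻¹ hx
  have h2 : ∀ y ∈ A₁⁻¹ * A₁, (1 - 2 * c) * μ ≤ overlap m A₁ y := fun y hy =>
    (le_overlap_of_mem_mul m hA₁ hle hinv hbig y hy).trans' (by linarith)
  have h4 : ∀ y ∈ (A₁⁻¹ * A₁) * (A₁⁻¹ * A₁), (1 - 4 * c) * μ ≤ overlap m A₁ y := fun y hy =>
    (le_overlap_of_mem_mul m hA₁ hle h2 h2 y hy).trans' (by linarith)
  obtain ⟨G₀, hG₀⟩ := exists_subgroup_coe_eq (S := A₁⁻¹ * A₁)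
    ⟨a₀⁻¹, inv_mem_inv.2 ha₀, a₀, ha₀, inv_mul_cancel a₀⟩
    (by rw [mul_inv_rev, inv_inv])
    (fun y hy => mem_inv_mul_of_overlap_pos m ((by nlinarith : 0 < (1 - 4 * c) * μ).trans_le
      (h4 y hy)))
  have hopen : IsOpen (G₀ : Set G) := by
    refine G₀.isOpen_of_measure_pos_subset m (hA₁.const_smul a₀⁻¹)
      (by rwa [measure_smul]) ?_
    rintro _ ⟨a, ha, rfl⟩
    exact hG₀ ▸ ⟨a₀⁻¹, inv_mem_inv.2 ha₀, a, ha, rfl⟩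
  exact ⟨⟨G₀, hG₀, hopen⟩, h4⟩

theorem stmt_6 {G : Type*} [Group G] [TopologicalSpace G] [IsTopologicalGroup G]
    [CompactSpace G] [MeasurableSpace G] [BorelSpace G]
    (m : Measure G) [m.IsHaarMeasure] [IsProbabilityMeasure m] [m.IsMulRightInvariant]
    (A₁ : Set G) (hA₁ : MeasurableSet A₁) (hA₁0 : 0 < m A₁)
    (μ : ℝ) (hμ : 0 < μ) (c : ℝ) (hc0 : 0 < c) (hc : c < 1/8)
    (hle : (m A₁).toReal ≤ μ)
    (hbig : ∀ x ∈ A₁, (m (((fun a => a * x⁻¹) '' A₁) ∩ A₁)).toReal ≥ (1 - c) * μ) :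
    (∃ G₀ : Subgroup G, (G₀ : Set G) = A₁⁻¹ * A₁ ∧ IsOpen (G₀ : Set G))
      ∧ ∀ y ∈ (A₁⁻¹ * A₁) * (A₁⁻¹ * A₁),
          (m (((fun a => a * y⁻¹) '' A₁) ∩ A₁)).toReal ≥ (1 - 4 * c) * μ :=
  stmt_6_general m A₁ hA₁ hA₁0 μ hμ c hc hle hbig
end

section
/- Let $G$ be a compact group with Haar probability measure $m$, let $H < G$ be a closed subgroup, and let $G_0 < G$ be an open subgroup. Suppose $A \subset G$ is a measurable set satisfying $Ah = A$ for all $h \in H$, and there exists $g \in G$ with $m(A \triangle g G_0) < \frac{1}{2} m(G_0)$. Then $H \subset G_0$. -/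
/-!
If `h ∉ G₀`, the coset `s = g G₀` and its right translate `s h` are disjoint, so by right
invariance `m (s h ∆ s) = 2 m (G₀)`. On the other hand `A h = A` and the triangle inequality give
`m (s h ∆ s) ≤ m (s h ∆ A h) + m (A ∆ s) = 2 m (A ∆ s) < m (G₀)`, a contradiction.
-/

open MeasureTheory Set Pointwise

theorem Subgroup.disjoint_image_mul_right_smul {G : Type*} [Group G] (K : Subgroup G) (g : G)
    {h : G} (hh : h ∉ K) :
    Disjoint ((· * h) '' (g • (K : Set G))) (g • (K : Set G)) := by
  rw [disjoint_left]
  rintro _ ⟨_, ⟨a, ha, rfl⟩, rfl⟩ ⟨b, hb, hab⟩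
  have hab : b = a * h := by simpa [smul_eq_mul, mul_assoc] using hab
  exact hh (by simpa [hab] using K.mul_mem (K.inv_mem ha) hb)

section

variable {G : Type*} [Group G] [MeasurableSpace G] [MeasurableMul G] (μ : Measure G)

theorem measure_image_mul_right_s10 [μ.IsMulRightInvariant] (h : G) (t : Set G) :
    μ ((· * h) '' t) = μ t := by
  rw [image_mul_right, measure_preimage_mul_right]

theorem measure_symmDiff_image_mul_right_le [μ.IsMulRightInvariant] {A : Set G} {h : G}
    (hA : (· * h) '' A = A) (t : Set G) :
    μ (symmDiff ((· * h) '' t) t) ≤ 2 * μ (symmDiff A t) :=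
  calc μ (symmDiff ((· * h) '' t) t)
      ≤ μ (symmDiff ((· * h) '' t) A) + μ (symmDiff A t) := measure_symmDiff_le _ _ _
    _ = μ (symmDiff A t) + μ (symmDiff A t) := by
      nth_rw 1 [← hA]
      rw [← image_symmDiff (mul_left_injective h), measure_image_mul_right_s10, symmDiff_comm]
    _ = 2 * μ (symmDiff A t) := (two_mul _).symm

theorem Subgroup.mem_of_two_mul_measure_symmDiff_smul_lt [μ.IsMulLeftInvariant]
    [μ.IsMulRightInvariant] (K : Subgroup G) (hK : MeasurableSet (K : Set G)) {A : Set G}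
    {g h : G} (hA : (· * h) '' A = A) (hlt : 2 * μ (symmDiff A (g • (K : Set G))) < μ K) :
    h ∈ K := by
  by_contra hh
  set s := g • (K : Set G)
  have hdisj := K.disjoint_image_mul_right_smul g hh
  have htranslate : μ (symmDiff ((· * h) '' s) s) = 2 * μ K := by
    have hunion : symmDiff ((· * h) '' s) s = (· * h) '' s ∪ s := hdisj.symmDiff_eq_sup
    rw [hunion, measure_union hdisj (hK.const_smul g),
      measure_image_mul_right_s10, measure_smul, two_mul]
  have hlt' := (measure_symmDiff_image_mul_right_le μ hA s).trans_lt hlt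
  rw [htranslate] at hlt'
  exact (le_mul_of_one_le_left' one_le_two).not_gt hlt'

end

theorem stmt_10_general {G : Type*} [Group G] [TopologicalSpace G] [IsTopologicalGroup G]
    [MeasurableSpace G] [BorelSpace G]
    (m : Measure G) [m.IsHaarMeasure] [IsProbabilityMeasure m] [m.IsMulRightInvariant]
    (H G₀ : Subgroup G) (hG₀ : IsOpen (G₀ : Set G))
    (A : Set G)
    (hAH : ∀ h ∈ H, (fun a => a * h) '' A = A)
    (g : G)
    (hclose : (m (symmDiff A (g • (G₀ : Set G)))).toReal
        < (1/2) * (m (G₀ : Set G)).toReal) :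
    (H : Set G) ⊆ (G₀ : Set G) := by
  intro h hh
  refine G₀.mem_of_two_mul_measure_symmDiff_smul_lt m hG₀.measurableSet (g := g) (hAH h hh) ?_
  rw [← ENNReal.toReal_lt_toReal (by finiteness) (by finiteness), ENNReal.toReal_mul]
  norm_num
  linarith

theorem stmt_10 {G : Type*} [Group G] [TopologicalSpace G] [IsTopologicalGroup G]
    [CompactSpace G] [MeasurableSpace G] [BorelSpace G]
    (m : Measure G) [m.IsHaarMeasure] [IsProbabilityMeasure m] [m.IsMulRightInvariant]
    (H G₀ : Subgroup G) (hH : IsClosed (H : Set G)) (hG₀ : IsOpen (G₀ : Set G))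
    (A : Set G) (hA : MeasurableSet A)
    (hAH : ∀ h ∈ H, (fun a => a * h) '' A = A)
    (g : G)
    (hclose : (m (symmDiff A (g • (G₀ : Set G)))).toReal
        < (1/2) * (m (G₀ : Set G)).toReal) :
    (H : Set G) ⊆ (G₀ : Set G) :=
  stmt_10_general m H G₀ hG₀ A hAH g hclose
end
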